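/- arXiv:2402.11427 — 2 statements merged into one kernel-verified Lean document; each statement's English description precedes it below -/
import Mathlib

section
/- Let X₁,…,Xₙ be independent standard normal random variables and Z = Σᵢ Xᵢ². Then for any ε ∈ (0,1), P(Z ≤ (1-ε)n) ≤ exp(-nε²/6). -/
open MeasureTheory ProbabilityTheory

/-!
Chernoff's bound: for `t ≥ 0`, `P(Z ≤ a) ≤ e^{ta} 𝔼[e^{-tZ}] = e^{ta} (1 + 2t)^{-n/2}`, the moment
generating function of a sum of independent squared standard normals being the product of the
Gaussian integrals `𝔼[e^{-tX²}] = (1 + 2t)^{-1/2}`. The choice `1 + 2t = (1 - ε)⁻¹` gives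
`P(Z ≤ (1 - ε)n) ≤ (e^ε (1 - ε))^{n/2}`, and `log (1 - ε) ≤ -ε - ε²/2` bounds this by `e^{-nε²/4}`.
-/

open Real Finset

lemma Real.log_one_sub_le_neg_sub_sq_div_two {x : ℝ} (h0 : 0 ≤ x) (h1 : x < 1) :
    log (1 - x) ≤ -x - x ^ 2 / 2 := by
  have hseries := hasSum_pow_div_log_of_abs_lt_one (abs_lt.2 ⟨by linarith, h1⟩)
  have := sum_le_hasSum (range 2) (fun i _ => by positivity) hseries
  norm_num [sum_range_succ] at this
  linarith

lemma Real.sqrt_one_sub_le_exp {x : ℝ} (h0 : 0 ≤ x) (h1 : x < 1) :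
    √(1 - x) ≤ exp (-x / 2 - x ^ 2 / 4) := by
  rw [sqrt_le_left (exp_pos _).le, ← exp_nat_mul, ← exp_log (sub_pos.2 h1)]
  gcongr
  push_cast
  linarith [log_one_sub_le_neg_sub_sq_div_two h0 h1]

/-- Outside `t < 1 / 2` both sides vanish: the integral diverges, and `√` of a negative is `0`. -/
lemma mgf_sq_gaussianReal (t : ℝ) :
    mgf (· ^ 2) (gaussianReal 0 1) t = (√(1 - 2 * t))⁻¹ := by
  have hdensity : ∀ x : ℝ, gaussianPDFReal 0 1 x • exp (t * x ^ 2)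
      = (√(2 * π))⁻¹ * exp (-(1 / 2 - t) * x ^ 2) := by
    intro x
    simp only [gaussianPDFReal, NNReal.coe_one, mul_one, sub_zero, smul_eq_mul, mul_assoc,
      ← exp_add]
    ring_nf
  rw [mgf, integral_gaussianReal_eq_integral_smul one_ne_zero]
  simp_rw [hdensity]
  rw [integral_const_mul, integral_gaussian, ← sqrt_inv, ← sqrt_inv,
    ← sqrt_mul (inv_nonneg.2 (by positivity))]
  congr 1
  field_simp

section

variable {Ω ι : Type*} [MeasurableSpace Ω] {μ : Measure Ω}

lemma mgf_sq_of_map_eq_gaussianReal {X : Ω → ℝ} (hX : μ.map X = gaussianReal 0 1) (t : ℝ) :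
    mgf (fun ω => X ω ^ 2) μ t = (√(1 - 2 * t))⁻¹ := by
  have hXmeas : AEMeasurable X μ := .of_map_ne_zero (hX ▸ NeZero.ne _)
  rw [← mgf_sq_gaussianReal, ← hX, mgf_map hXmeas (by fun_prop)]
  rfl

lemma mgf_sum_sq_of_iIndepFun_gaussianReal {X : ι → Ω → ℝ}
    (hgauss : ∀ i, μ.map (X i) = gaussianReal 0 1) (hindep : iIndepFun X μ)
    (s : Finset ι) (t : ℝ) :
    mgf (fun ω => ∑ i ∈ s, X i ω ^ 2) μ t = (√(1 - 2 * t))⁻¹ ^ #s := by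
  have hsq : iIndepFun (fun i ω => X i ω ^ 2) μ :=
    hindep.comp (fun _ x => x ^ 2) (fun _ => by fun_prop)
  have hmeas : ∀ i, AEMeasurable (fun ω => X i ω ^ 2) μ := fun i =>
    (AEMeasurable.of_map_ne_zero (hgauss i ▸ NeZero.ne _)).pow_const 2
  rw [← sum_fn, hsq.mgf_sum₀ hmeas, prod_congr rfl fun i _ =>
    mgf_sq_of_map_eq_gaussianReal (hgauss i) t, prod_const]

lemma measureReal_sum_sq_le_le_exp_mul [IsProbabilityMeasure μ] {X : ι → Ω → ℝ}
    (hgauss : ∀ i, μ.map (X i) = gaussianReal 0 1) (hindep : iIndepFun X μ)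
    (s : Finset ι) (a : ℝ) {t : ℝ} (ht : 0 ≤ t) :
    μ.real {ω | ∑ i ∈ s, X i ω ^ 2 ≤ a} ≤ exp (t * a) * (√(1 + 2 * t))⁻¹ ^ #s := by
  have hmgf := mgf_sum_sq_of_iIndepFun_gaussianReal hgauss hindep s (-t)
  have hint : Integrable (fun ω => exp (-t * ∑ i ∈ s, X i ω ^ 2)) μ := by
    rw [← mgf_pos_iff, hmgf]
    exact pow_pos (inv_pos.2 (sqrt_pos.2 (by linarith))) _
  simpa [hmgf, sub_eq_add_neg] using measure_le_le_exp_mul_mgf a (neg_nonpos.2 ht) hint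

end

theorem chi_squared_lower_tail_general {Ω : Type*} [MeasurableSpace Ω] (μ : Measure Ω)
    [IsProbabilityMeasure μ] (n : ℕ) (X : Fin n → Ω → ℝ)
    (hgauss : ∀ i, μ.map (X i) = gaussianReal 0 1)
    (hindep : iIndepFun X μ)
    (ε : ℝ) (hε : ε ∈ Set.Ioo (0 : ℝ) 1) :
    μ {ω | ∑ i, X i ω ^ 2 ≤ (1 - ε) * n}
      ≤ ENNReal.ofReal (Real.exp (-(n : ℝ) * ε ^ 2 / 6)) := by
  obtain ⟨hε0, hε1⟩ := hε
  have h1ε : 0 < 1 - ε := sub_pos.2 hε1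
  set t := ε / (2 * (1 - ε)) with ht_def
  have hchernoff := measureReal_sum_sq_le_le_exp_mul hgauss hindep univ ((1 - ε) * n)
    (t := t) (by positivity)
  have hinv : 1 + 2 * t = (1 - ε)⁻¹ := by rw [ht_def]; field_simp; ring
  rw [hinv, sqrt_inv, inv_inv, card_univ, Fintype.card_fin] at hchernoff
  have hbound : exp (t * ((1 - ε) * n)) * √(1 - ε) ^ n ≤ exp (-n * ε ^ 2 / 6) :=
    calc exp (t * ((1 - ε) * n)) * √(1 - ε) ^ n
        ≤ exp (t * ((1 - ε) * n)) * exp (-ε / 2 - ε ^ 2 / 4) ^ n := by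
          gcongr; exact sqrt_one_sub_le_exp hε0.le hε1
      _ = exp (-n * ε ^ 2 / 4) := by
          rw [← exp_nat_mul, ← exp_add, ht_def]; congr 1; field_simp; ring
      _ ≤ exp (-n * ε ^ 2 / 6) := by
          have : 0 ≤ n * ε ^ 2 := by positivity
          exact exp_le_exp.2 (by linarith)
  rw [← ofReal_measureReal]
  exact ENNReal.ofReal_le_ofReal (hchernoff.trans hbound)

/-- Lower-tail bound for a chi-squared random variable with `n` degrees of freedom. -/
theorem chi_squared_lower_tail {Ω : Type*} [MeasurableSpace Ω] (μ : Measure Ω)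
    [IsProbabilityMeasure μ] (n : ℕ) (X : Fin n → Ω → ℝ)
    (hmeas : ∀ i, Measurable (X i))
    (hgauss : ∀ i, μ.map (X i) = gaussianReal 0 1)
    (hindep : iIndepFun X μ)
    (ε : ℝ) (hε : ε ∈ Set.Ioo (0 : ℝ) 1) :
    μ {ω | ∑ i, X i ω ^ 2 ≤ (1 - ε) * n}
      ≤ ENNReal.ofReal (Real.exp (-(n : ℝ) * ε ^ 2 / 6)) :=
  chi_squared_lower_tail_general μ n X hgauss hindep ε hε
end

section
/- Let Φ_{n-1} be a symmetric positive definite matrix and φ_n a vector with ‖Φ_{n-1}^{-1/2} φ_n‖² ≤ κσ². Then for any vector φ, σ² φ^T (Φ_{n-1} + φ_n φ_n^T)^{-1} φ ≥ (σ²/(1 + κσ²)) φ^T Φ_{n-1}^{-1} φ. In particular, the posterior variance after one more observation is at least a 1/(1+κσ²) fraction of the previous posterior variance. -/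
/-!
Write `a = φᵀΦ⁻¹φ`, `b = φᵀΦ⁻¹φₙ` and `c = φₙᵀΦ⁻¹φₙ`. The Sherman–Morrison formula gives
`φᵀ(Φ + φₙφₙᵀ)⁻¹φ = a - b² / (1 + c)`, and Cauchy–Schwarz for the inner product defined by `Φ⁻¹`
gives `b² ≤ a c`, so this is at least `a / (1 + c) ≥ a / (1 + κσ²)`.
-/

open Matrix

variable {m : Type*} [Fintype m]

theorem Matrix.PosSemidef.dotProduct_mulVec_sq_le {M : Matrix m m ℝ} (hM : M.PosSemidef)
    (x y : m → ℝ) : (x ⬝ᵥ M *ᵥ y) ^ 2 ≤ (x ⬝ᵥ M *ᵥ x) * (y ⬝ᵥ M *ᵥ y) := by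
  let := M.toSeminormedAddCommGroup hM
  let := M.toInnerProductSpace hM
  have hinner (a b : m → ℝ) : inner ℝ a b = a ⬝ᵥ M *ᵥ b := dotProduct_comm _ _
  simpa only [sq, hinner] using real_inner_mul_inner_self_le x y

variable [DecidableEq m]

theorem Matrix.inv_add_vecMulVec {K : Type*} [Field K] {A : Matrix m m K} (hA : IsUnit A.det)
    (u v : m → K) (h : 1 + v ⬝ᵥ A⁻¹ *ᵥ u ≠ 0) :
    (A + vecMulVec u v)⁻¹
      = A⁻¹ - (1 + v ⬝ᵥ A⁻¹ *ᵥ u)⁻¹ • vecMulVec (A⁻¹ *ᵥ u) (v ᵥ* A⁻¹) := by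
  apply inv_eq_right_inv
  rw [Matrix.mul_sub, Matrix.add_mul, Matrix.add_mul, mul_nonsing_inv _ hA, Matrix.mul_smul,
    Matrix.mul_smul, mul_vecMulVec, mulVec_mulVec, mul_nonsing_inv _ hA, one_mulVec,
    vecMulVec_mul, vecMulVec_mul_vecMulVec, vecMulVec_smul, smul_smul,
    ← add_smul, ← mul_one_add, inv_mul_cancel₀ h, one_smul, add_sub_cancel_right]

theorem Matrix.dotProduct_inv_add_vecMulVec_mulVec {K : Type*} [Field K] {A : Matrix m m K}
    (hA : IsUnit A.det) (u v x y : m → K) (h : 1 + v ⬝ᵥ A⁻¹ *ᵥ u ≠ 0) :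
    x ⬝ᵥ (A + vecMulVec u v)⁻¹ *ᵥ y
      = x ⬝ᵥ A⁻¹ *ᵥ y - (x ⬝ᵥ A⁻¹ *ᵥ u) * (v ⬝ᵥ A⁻¹ *ᵥ y) / (1 + v ⬝ᵥ A⁻¹ *ᵥ u) := by
  rw [inv_add_vecMulVec hA u v h, sub_mulVec, smul_mulVec, vecMulVec_mulVec, dotProduct_sub,
    dotProduct_smul, dotProduct_smul, ← dotProduct_mulVec]
  simp only [MulOpposite.smul_eq_mul_unop, MulOpposite.unop_op, smul_eq_mul]
  ring

theorem Matrix.PosDef.dotProduct_inv_mulVec_div_le_inv_add_vecMulVec {A : Matrix m m ℝ}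
    (hA : A.PosDef) (u x : m → ℝ) :
    x ⬝ᵥ A⁻¹ *ᵥ x / (1 + u ⬝ᵥ A⁻¹ *ᵥ u) ≤ x ⬝ᵥ (A + vecMulVec u u)⁻¹ *ᵥ x := by
  have hc : 0 ≤ u ⬝ᵥ A⁻¹ *ᵥ u := hA.inv.posSemidef.dotProduct_mulVec_nonneg u
  have hsymm : u ⬝ᵥ A⁻¹ *ᵥ x = x ⬝ᵥ A⁻¹ *ᵥ u := by
    rw [dotProduct_comm, dotProduct_mulVec, ← mulVec_transpose,
      (isHermitian_iff_isSymm.mp hA.inv.isHermitian).eq]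
  rw [dotProduct_inv_add_vecMulVec_mulVec hA.det_pos.ne'.isUnit u u x x (by positivity), hsymm,
    ← sq, le_sub_iff_add_le, ← add_div, div_le_iff₀ (by positivity), mul_one_add]
  linarith [hA.inv.posSemidef.dotProduct_mulVec_sq_le x u]

theorem variance_shrinkage_lower_bound_general {n : ℕ} (Φ : Matrix (Fin n) (Fin n) ℝ)
    (hΦ : Φ.PosDef) (φn φ : Fin n → ℝ) (κ σ : ℝ)
    (hφn : φn ⬝ᵥ Φ⁻¹.mulVec φn ≤ κ * σ ^ 2) :
    σ ^ 2 * (φ ⬝ᵥ (Φ + vecMulVec φn φn)⁻¹.mulVec φ)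
      ≥ σ ^ 2 / (1 + κ * σ ^ 2) * (φ ⬝ᵥ Φ⁻¹.mulVec φ) := by
  have hc : 0 ≤ φn ⬝ᵥ Φ⁻¹ *ᵥ φn := hΦ.inv.posSemidef.dotProduct_mulVec_nonneg φn
  have ha : 0 ≤ φ ⬝ᵥ Φ⁻¹ *ᵥ φ := hΦ.inv.posSemidef.dotProduct_mulVec_nonneg φ
  calc σ ^ 2 / (1 + κ * σ ^ 2) * (φ ⬝ᵥ Φ⁻¹ *ᵥ φ)
      = σ ^ 2 * ((φ ⬝ᵥ Φ⁻¹ *ᵥ φ) / (1 + κ * σ ^ 2)) := by ring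
    _ ≤ σ ^ 2 * ((φ ⬝ᵥ Φ⁻¹ *ᵥ φ) / (1 + φn ⬝ᵥ Φ⁻¹ *ᵥ φn)) := by gcongr
    _ ≤ σ ^ 2 * (φ ⬝ᵥ (Φ + vecMulVec φn φn)⁻¹ *ᵥ φ) := by
      gcongr; exact hΦ.dotProduct_inv_mulVec_div_le_inv_add_vecMulVec φn φ

theorem variance_shrinkage_lower_bound {n : ℕ} (Φ : Matrix (Fin n) (Fin n) ℝ)
    (hΦ : Φ.PosDef) (φn φ : Fin n → ℝ) (κ σ : ℝ) (hκ : 0 < κ) (hσ : 0 < σ ^ 2)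
    (hφn : φn ⬝ᵥ Φ⁻¹.mulVec φn ≤ κ * σ ^ 2) :
    σ ^ 2 * (φ ⬝ᵥ (Φ + vecMulVec φn φn)⁻¹.mulVec φ)
      ≥ σ ^ 2 / (1 + κ * σ ^ 2) * (φ ⬝ᵥ Φ⁻¹.mulVec φ) :=
  variance_shrinkage_lower_bound_general Φ hΦ φn φ κ σ hφn
end
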